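/- arXiv:1506.04490 — 3 statements merged into one kernel-verified Lean document; each statement's English description precedes it below -/
import Mathlib

section
/- For every word in the q=0 oscillator algebra generated by a^+, a^-, k (subject to k² = k, k a^+ = 0, a^- k = 0, a^- a^+ = 1, a^+ a^- = 1 - k), its action on the Fock space equals a linear combination (with coefficients 0 or 1) of operators of the form 1, (a^+)^r, (a^-)^r, or (a^+)^s k (a^-)^t; i.e., these monomials span the algebra of operators generated by a^+, a^-, k. -/
/-!
All the relations of the algebra follow from `a⁻ a⁺ = 1` and `a⁺ a⁻ = 1 - k`. Using them, any
monomial `(a⁺)^s (a⁻)^t` or `(a⁺)^s k (a⁻)^t` multiplied on the right by a generator is again such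
a monomial or zero, so these monomials span the generated algebra; and `(a⁺)^s (a⁻)^t` reduces to
the monomials of the statement by repeatedly replacing `a⁺ a⁻` with `1 - k`.
-/

/-- `a^+|m⟩ = |m+1⟩`. -/
noncomputable def aP : Module.End ℚ (ℕ →₀ ℚ) :=
  Finsupp.lsum ℚ fun m => Finsupp.lsingle (m + 1)

/-- `a^-|0⟩ = 0`, `a^-|m⟩ = |m-1⟩` for `m ≥ 1`. -/
noncomputable def aM : Module.End ℚ (ℕ →₀ ℚ) :=
  Finsupp.lsum ℚ fun m => if m = 0 then 0 else Finsupp.lsingle (m - 1)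

/-- `k|0⟩ = |0⟩`, `k|m⟩ = 0` for `m ≥ 1`. -/
noncomputable def kk : Module.End ℚ (ℕ →₀ ℚ) :=
  Finsupp.lsum ℚ fun m => if m = 0 then Finsupp.lsingle 0 else 0

/-- `p`, `m`, `k` stand for `a⁺`, `a⁻`, `k`. -/
structure OscillatorRelations {A : Type*} [Ring A] (p m k : A) : Prop where
  m_mul_p : m * p = 1
  p_mul_m : p * m = 1 - k

namespace OscillatorRelations

section Relations

variable {A : Type*} [Ring A] {p m k : A} (h : OscillatorRelations p m k)
include h

theorem k_eq_one_sub : k = 1 - p * m := by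
  rw [h.p_mul_m, sub_sub_cancel]

theorem k_mul_p : k * p = 0 := by
  rw [h.k_eq_one_sub, sub_mul, one_mul, mul_assoc, h.m_mul_p, mul_one, sub_self]

theorem m_mul_k : m * k = 0 := by
  rw [h.k_eq_one_sub, mul_sub, mul_one, ← mul_assoc, h.m_mul_p, one_mul, sub_self]

theorem k_mul_k : k * k = k := by
  nth_rewrite 1 [h.k_eq_one_sub]
  rw [sub_mul, one_mul, mul_assoc, h.m_mul_k, mul_zero, sub_zero]

theorem m_pow_succ_mul_p (t : ℕ) : m ^ (t + 1) * p = m ^ t := by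
  rw [pow_succ, mul_assoc, h.m_mul_p, mul_one]

theorem m_pow_succ_mul_k (t : ℕ) : m ^ (t + 1) * k = 0 := by
  rw [pow_succ, mul_assoc, h.m_mul_k, mul_zero]

theorem p_pow_succ_mul_m_pow_succ (s t : ℕ) :
    p ^ (s + 1) * m ^ (t + 1) = p ^ s * m ^ t - p ^ s * k * m ^ t := by
  rw [pow_succ, pow_succ', mul_assoc, ← mul_assoc p, h.p_mul_m, sub_mul, one_mul, mul_sub,
    mul_assoc]

end Relations

section Span

variable {R A : Type*} [CommRing R] [Ring A] [Algebra R A]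

variable (p m k : A) in
def normalMonomials : Set A :=
  {x | ∃ s t : ℕ, x = p ^ s * m ^ t} ∪ {x | ∃ s t : ℕ, x = p ^ s * k * m ^ t}

variable (p m k : A) in
def monomials : Set A :=
  {1} ∪ {x | ∃ r ≥ 1, x = p ^ r} ∪ {x | ∃ r ≥ 1, x = m ^ r} ∪ {x | ∃ s t : ℕ, x = p ^ s * k * m ^ t}

variable {p m k : A} (h : OscillatorRelations p m k)
include h

theorem mul_mem_span_normalMonomials {x g : A} (hx : x ∈ normalMonomials p m k)
    (hg : g ∈ ({p, m, k} : Set A)) : x * g ∈ Submodule.span R (normalMonomials p m k) := by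
  have hpm (s t : ℕ) : p ^ s * m ^ t ∈ Submodule.span R (normalMonomials p m k) :=
    Submodule.subset_span (Or.inl ⟨s, t, rfl⟩)
  have hpkm (s t : ℕ) : p ^ s * k * m ^ t ∈ Submodule.span R (normalMonomials p m k) :=
    Submodule.subset_span (Or.inr ⟨s, t, rfl⟩)
  rcases hx with ⟨s, t, rfl⟩ | ⟨s, t, rfl⟩ <;> rcases hg with rfl | rfl | rfl
  · cases t with
    | zero => simpa [← pow_succ] using hpm (s + 1) 0
    | succ t => rw [mul_assoc, h.m_pow_succ_mul_p]; exact hpm s t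
  · rw [mul_assoc, ← pow_succ]; exact hpm s (t + 1)
  · cases t with
    | zero => simpa using hpkm s 0
    | succ t => rw [mul_assoc, h.m_pow_succ_mul_k, mul_zero]; exact zero_mem _
  · cases t with
    | zero => rw [pow_zero, mul_one, mul_assoc, h.k_mul_p, mul_zero]; exact zero_mem _
    | succ t => rw [mul_assoc, h.m_pow_succ_mul_p]; exact hpkm s t
  · rw [mul_assoc, ← pow_succ]; exact hpkm s (t + 1)
  · cases t with
    | zero => simpa [mul_assoc, h.k_mul_k] using hpkm s 0
    | succ t => rw [mul_assoc, h.m_pow_succ_mul_k, mul_zero]; exact zero_mem _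

theorem adjoin_le_span_normalMonomials :
    Subalgebra.toSubmodule (Algebra.adjoin R {p, m, k}) ≤
      Submodule.span R (normalMonomials p m k) := by
  rw [Algebra.adjoin_eq_span, Submodule.span_le]
  intro x hx
  induction hx using Submonoid.closure_induction_right with
  | one => exact Submodule.subset_span (Or.inl ⟨0, 0, by simp⟩)
  | mul_right x _ g hg hx =>
    have hmul : Submodule.span R (normalMonomials p m k) ≤
        (Submodule.span R (normalMonomials p m k)).comap (LinearMap.mulRight R g) :=
      Submodule.span_le.mpr fun y hy => h.mul_mem_span_normalMonomials hy hg
    exact hmul hx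

theorem p_pow_mul_m_pow_mem_span_monomials (s t : ℕ) :
    p ^ s * m ^ t ∈ Submodule.span R (monomials p m k) := by
  induction s generalizing t with
  | zero =>
    rcases Nat.eq_zero_or_pos t with rfl | ht
    · exact Submodule.subset_span (Or.inl (Or.inl (Or.inl (by simp))))
    · exact Submodule.subset_span (Or.inl (Or.inr ⟨t, ht, by simp⟩))
  | succ s ih =>
    cases t with
    | zero => exact Submodule.subset_span (Or.inl (Or.inl (Or.inr ⟨s + 1, by omega, by simp⟩)))
    | succ t =>
      rw [h.p_pow_succ_mul_m_pow_succ]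
      exact sub_mem (ih t) (Submodule.subset_span (Or.inr ⟨s, t, rfl⟩))

theorem adjoin_le_span_monomials :
    Subalgebra.toSubmodule (Algebra.adjoin R {p, m, k}) ≤ Submodule.span R (monomials p m k) := by
  refine h.adjoin_le_span_normalMonomials.trans (Submodule.span_le.mpr ?_)
  rintro x (⟨s, t, rfl⟩ | ⟨s, t, rfl⟩)
  · exact h.p_pow_mul_m_pow_mem_span_monomials s t
  · exact Submodule.subset_span (Or.inr ⟨s, t, rfl⟩)

end Span

end OscillatorRelations

lemma aP_single (m : ℕ) (q : ℚ) : aP (Finsupp.single m q) = Finsupp.single (m + 1) q := by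
  simp [aP]

lemma aM_single (m : ℕ) (q : ℚ) :
    aM (Finsupp.single m q) = if m = 0 then 0 else Finsupp.single (m - 1) q := by
  by_cases h : m = 0 <;> simp [aM, h]

lemma kk_single (m : ℕ) (q : ℚ) :
    kk (Finsupp.single m q) = if m = 0 then Finsupp.single 0 q else 0 := by
  by_cases h : m = 0 <;> simp [kk, h]

theorem oscillatorRelations_aP_aM_kk : OscillatorRelations aP aM kk where
  m_mul_p := by
    refine Finsupp.lhom_ext fun n q => ?_
    simp [Module.End.mul_apply, aP_single, aM_single]
  p_mul_m := by
    refine Finsupp.lhom_ext fun n q => ?_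
    cases n <;> simp [Module.End.mul_apply, aP_single, aM_single, kk_single]

/-- every element of the operator algebra generated by `a^+, a^-, k`
lies in the linear span of the monomials `1`, `(a^+)^r`, `(a^-)^r`, `(a^+)^s k (a^-)^t`. -/
theorem stmt3 (X : Module.End ℚ (ℕ →₀ ℚ))
    (hX : X ∈ Algebra.adjoin ℚ ({aP, aM, kk} : Set (Module.End ℚ (ℕ →₀ ℚ)))) :
    X ∈ Submodule.span ℚ
      (({1} : Set (Module.End ℚ (ℕ →₀ ℚ)))
        ∪ {Y | ∃ r ≥ 1, Y = aP ^ r}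
        ∪ {Y | ∃ r ≥ 1, Y = aM ^ r}
        ∪ {Y | ∃ s t : ℕ, Y = aP ^ s * kk * aM ^ t}) :=
  oscillatorRelations_aP_aM_kk.adjoin_le_span_monomials hX
end

section
/- For the combinatorial R map R^{l,m}: B^l ⊗ B^m → B^m ⊗ B^l with l ≤ m defined by the Nakayashiki–Yamada rule, if R(i ⊗ j) = b ⊗ a then i ≤ b and a ≤ j componentwise (i.e., b - i and j - a have all entries in {0,1,...} as integer vectors). -/
/-- number of 1's -/
def wt {L : ℕ} (x : Fin L → Bool) : ℕ := (Finset.univ.filter fun r => x r = true).card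

/-- Admissibility of a single vertex of the q=0 five-vertex model underlying the
Nakayashiki–Yamada rule: `(a,b,i,j)` are the four binary edges of the vertex and
`cl, cr` count the H-lines on the segments to the left and right of the vertex
(the identity vertices preserve the count, `a^+` (a dot of the bottom row `i`
emitting an H-line) has `cl = cr + 1`, `a^-` (a dot of the top row `j` absorbing
an H-line) has `cr = cl + 1`, and `k` (an unconnected top dot) requires no
H-lines on either side). -/
def localOK : Bool → Bool → Bool → Bool → ℕ → ℕ → Prop
  | false, false, false, false, cl, cr => cl = cr
  | true,  true,  true,  true,  cl, cr => cl = cr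
  | false, true,  true,  false, cl, cr => cl = cr + 1
  | true,  false, false, true,  cl, cr => cr = cl + 1
  | false, true,  false, true,  cl, cr => cl = 0 ∧ cr = 0
  | _, _, _, _, _, _ => False

/-- The combinatorial `R` (Nakayashiki–Yamada rule) as a relation:
`R(i ⊗ j) = b ⊗ a` iff there is a cyclic configuration of H-lines connecting the
dots of the bottom row `i` to dots of the top row `j`, the unconnected top dots
being moved to the bottom (`b` is the new bottom row, `a` the new top row). -/
def NYrel (L : ℕ) (i j b a : Fin L → Bool) : Prop :=
  ∃ c : Fin L → ℕ, ∀ r : Fin L, localOK (a r) (b r) (i r) (j r) (c r) (c (finRotate L r))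

/- Both inequalities hold vertex by vertex: the only admissible vertices carrying a dot of `i`
are the identity and `a^+`, which both carry a dot of `b`, and the only ones carrying a dot of
`a` are the identity and `a^-`, which both carry a dot of `j`. -/

theorem localOK_i_le_b_and_a_le_j {a b i j : Bool} {cl cr : ℕ} (h : localOK a b i j cl cr) :
    (i = true → b = true) ∧ (a = true → j = true) := by
  revert h
  cases a <;> cases b <;> cases i <;> cases j <;> simp [localOK]

theorem stmt8_general (L : ℕ)
    (i j b a : Fin L → Bool)
    (h : NYrel L i j b a) :
    (∀ r, i r = true → b r = true) ∧ (∀ r, a r = true → j r = true) := by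
  obtain ⟨c, hc⟩ := h
  exact ⟨fun r => (localOK_i_le_b_and_a_le_j (hc r)).1, fun r => (localOK_i_le_b_and_a_le_j (hc r)).2⟩

/-- for the combinatorial `R^{l,m} : B^l ⊗ B^m → B^m ⊗ B^l` with
`l ≤ m`, if `R(i ⊗ j) = b ⊗ a` then `i ≤ b` and `a ≤ j` componentwise. -/
theorem stmt8 (L l m : ℕ) (hl : 1 ≤ l) (hlm : l ≤ m) (hm : m < L)
    (i j b a : Fin L → Bool)
    (hi : wt i = l) (hj : wt j = m) (hb : wt b = m) (ha : wt a = l)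
    (h : NYrel L i j b a) :
    (∀ r, i r = true → b r = true) ∧ (∀ r, a r = true → j r = true) :=
  stmt8_general L i j b a h
end

section
/- For the 2-species TASEP on 3 sites with one particle of each species 0, 1, 2, the vector |P̄⟩ = 2|012⟩ + |021⟩ + |102⟩ + 2|120⟩ + 2|201⟩ + |210⟩ satisfies H|P̄⟩ = 0, where H = Σ_{i ∈ ℤ_3} h_{i,i+1} is the Markov matrix with local action h|σ,σ'⟩ = |σ',σ⟩ - |σ,σ'⟩ if σ > σ' and 0 otherwise. -/
/-- Exchange the entries at the cyclically adjacent sites `i, i+1`. -/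
def swapAd {L : ℕ} [NeZero L] (i : Fin L) (σ : Fin L → Fin 3) : Fin L → Fin 3 :=
  fun r => if r = i then σ (i + 1) else if r = i + 1 then σ i else σ r

/-- The Markov matrix `H = Σ_{i ∈ ℤ_L} h_{i,i+1}` of the 2-TASEP on `ℤ_L`, acting
on the free vector space over `{0,1,2}^L`: on a basis ket,
`h_{i,i+1}|σ⟩ = |swap_i σ⟩ - |σ⟩` if `σ_i > σ_{i+1}`, and `0` otherwise. -/
noncomputable def Hmat (L : ℕ) [NeZero L] :
    ((Fin L → Fin 3) →₀ ℚ) →ₗ[ℚ] ((Fin L → Fin 3) →₀ ℚ) :=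
  Finsupp.lsum ℚ fun σ => ∑ i : Fin L,
    if σ (i + 1) < σ i then Finsupp.lsingle (swapAd i σ) - Finsupp.lsingle σ else 0

/-! `H` is a Markov generator, so `H v = 0` is the global balance condition: at every
configuration `τ`, the weight flowing in (from the configurations `swap_i τ` with an ascent
`τ_i < τ_{i+1}`) equals the weight `v τ` times the number of descents of `τ`. For the
three-site vector `|P̄⟩` this is a finite check over the `27` configurations. -/

section
variable {L : ℕ} [NeZero L]

@[simp]
theorem swapAd_apply_self (i : Fin L) (σ : Fin L → Fin 3) : swapAd i σ i = σ (i + 1) := by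
  simp [swapAd]

@[simp]
theorem swapAd_apply_add_one (i : Fin L) (σ : Fin L → Fin 3) : swapAd i σ (i + 1) = σ i := by
  by_cases h : i + 1 = i <;> simp [swapAd, h]

theorem swapAd_involutive (i : Fin L) : Function.Involutive (swapAd i) := by
  intro σ
  funext r
  by_cases hi : r = i
  · simp [hi]
  by_cases hi' : r = i + 1
  · simp [hi']
  simp [swapAd, hi, hi']

theorem Hmat_single (σ : Fin L → Fin 3) (c : ℚ) :
    Hmat L (Finsupp.single σ c) = ∑ i : Fin L,
      if σ (i + 1) < σ i then Finsupp.single (swapAd i σ) c - Finsupp.single σ c else 0 := by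
  rw [Hmat, Finsupp.lsum_single, LinearMap.sum_apply]
  refine Finset.sum_congr rfl fun i _ => ?_
  split_ifs <;> rfl

theorem Hmat_apply (v : (Fin L → Fin 3) →₀ ℚ) (τ : Fin L → Fin 3) :
    Hmat L v τ = ∑ i : Fin L, (if τ i < τ (i + 1) then v (swapAd i τ) else 0)
      - ∑ i : Fin L, if τ (i + 1) < τ i then v τ else 0 := by
  conv_lhs => rw [← Finsupp.univ_sum_single v]
  simp only [map_sum, Hmat_single, Finsupp.coe_finsetSum, Finset.sum_apply]
  rw [Finset.sum_comm, ← Finset.sum_sub_distrib]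
  refine Finset.sum_congr rfl fun i _ => ?_
  -- the configurations `σ` that jump to `τ` across the bond `i` are exactly `σ = swap_i τ`
  have gain : ∑ σ : Fin L → Fin 3,
      (if σ (i + 1) < σ i then Finsupp.single (swapAd i σ) (v σ) τ else 0)
        = if τ i < τ (i + 1) then v (swapAd i τ) else 0 := by
    rw [← Equiv.sum_comp (swapAd_involutive i).toPerm, Fintype.sum_eq_single τ]
    · simp [swapAd_involutive i τ]
    · intro σ hσ
      simp [swapAd_involutive i σ, Ne.symm hσ]
  have loss : ∑ σ : Fin L → Fin 3, (if σ (i + 1) < σ i then Finsupp.single σ (v σ) τ else 0)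
      = if τ (i + 1) < τ i then v τ else 0 := by
    rw [Fintype.sum_eq_single τ]
    · simp
    · intro σ hσ
      simp [Ne.symm hσ]
  rw [← gain, ← loss, ← Finset.sum_sub_distrib]
  refine Finset.sum_congr rfl fun σ _ => ?_
  split_ifs <;> simp

theorem Hmat_eq_zero_iff (v : (Fin L → Fin 3) →₀ ℚ) :
    Hmat L v = 0 ↔ ∀ τ : Fin L → Fin 3,
      ∑ i : Fin L, (if τ i < τ (i + 1) then v (swapAd i τ) else 0)
        = ∑ i : Fin L, if τ (i + 1) < τ i then v τ else 0 := by
  simp only [Finsupp.ext_iff, Hmat_apply, Finsupp.coe_zero, Pi.zero_apply, sub_eq_zero]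

end

/-- the vector
`|P̄⟩ = 2|012⟩ + |021⟩ + |102⟩ + 2|120⟩ + 2|201⟩ + |210⟩`
is a steady state of the 2-TASEP on 3 sites: `H|P̄⟩ = 0`. -/
theorem stmt13 :
    Hmat 3 (Finsupp.single ![0, 1, 2] (2 : ℚ) + Finsupp.single ![0, 2, 1] 1
      + Finsupp.single ![1, 0, 2] 1 + Finsupp.single ![1, 2, 0] 2
      + Finsupp.single ![2, 0, 1] 2 + Finsupp.single ![2, 1, 0] 1) = 0 := by
  rw [Hmat_eq_zero_iff]
  simp only [Finsupp.coe_add, Pi.add_apply, Finsupp.single_apply]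
  decide +kernel
end
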